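/- Let d ≥ 2 and N ≥ 2, and set d̃ = d^{N−1} − d + 1. Then { i_1·d̃ + ∑_{k=2}^N i_k·d^{N−k} : i_1, i_2, …, i_N ∈ {0,…,d−1} } = {0, 1, …, d^N − (d−1)² − 1}; in particular this set has exactly d^N − (d−1)² elements. -/

import Mathlib

/-!
Write `D = d^(N-1)` and `d̃ = D - d + 1`. The digits `i_2, …, i_N` are the base-`d` digits of an
arbitrary number `m < D`, so the set is `{a * d̃ + m : a < d, m < D}`. Since `d̃ ≤ D`, consecutive
blocks `[a * d̃, a * d̃ + D)` overlap, and their union is the initial segment below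
`(d - 1) * d̃ + D = d^N - (d-1)^2`.
-/

open Finset

theorem Nat.exists_sum_digit_mul_pow_eq_iff {d L m : ℕ} :
    (∃ f : ℕ → ℕ, (∀ j < L, f j < d) ∧ m = ∑ j ∈ range L, f j * d ^ j) ↔ m < d ^ L := by
  constructor
  · rintro ⟨f, hf, rfl⟩
    have h := (finFunctionFinEquiv fun j : Fin L => (⟨f j, hf j j.2⟩ : Fin d)).isLt
    rwa [finFunctionFinEquiv_apply, Fin.sum_univ_eq_sum_range (fun j => f j * d ^ j)] at h
  · intro hm
    set g := finFunctionFinEquiv.symm (⟨m, hm⟩ : Fin (d ^ L))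
    refine ⟨fun j => m / d ^ j % d, fun j hj => by simpa [g] using (g ⟨j, hj⟩).isLt, ?_⟩
    have h := congrArg Fin.val (finFunctionFinEquiv.apply_symm_apply (⟨m, hm⟩ : Fin (d ^ L)))
    simp only [finFunctionFinEquiv_apply, finFunctionFinEquiv_symm_apply_val] at h
    rw [← Fin.sum_univ_eq_sum_range (fun j => m / d ^ j % d * d ^ j), h]

theorem Finset.sum_Icc_two_sub_eq_sum_range {M : Type*} [AddCommMonoid M] (f : ℕ → M) (N : ℕ) :
    ∑ k ∈ Icc 2 N, f (N - k) = ∑ j ∈ range (N - 1), f j := by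
  rw [← Ico_add_one_right_eq_Icc, sum_Ico_reflect f 2 le_rfl, range_eq_Ico]
  congr 2
  omega

theorem Nat.exists_sum_Icc_two_digit_mul_pow_eq_iff {d N m : ℕ} :
    (∃ i : ℕ → ℕ, (∀ k ∈ Icc 2 N, i k < d) ∧ m = ∑ k ∈ Icc 2 N, i k * d ^ (N - k)) ↔
      m < d ^ (N - 1) := by
  rw [← Nat.exists_sum_digit_mul_pow_eq_iff]
  constructor
  · rintro ⟨i, hi, rfl⟩
    refine ⟨fun j => i (N - j), fun j hj => hi _ (by simp only [mem_Icc]; omega), ?_⟩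
    rw [← sum_Icc_two_sub_eq_sum_range]
    refine sum_congr rfl fun k hk => ?_
    dsimp only
    rw [Nat.sub_sub_self (mem_Icc.mp hk).2]
  · rintro ⟨f, hf, rfl⟩
    refine ⟨fun k => f (N - k), fun k hk => hf _ (by simp only [mem_Icc] at hk; omega), ?_⟩
    exact (sum_Icc_two_sub_eq_sum_range (fun j => f j * d ^ j) N).symm

theorem Nat.exists_leading_digit_mul_add_tail_eq_iff {d N t n : ℕ} (hN : 1 ≤ N) :
    (∃ i : ℕ → ℕ, (∀ k ∈ Icc 1 N, i k < d) ∧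
        n = i 1 * t + ∑ k ∈ Icc 2 N, i k * d ^ (N - k)) ↔
      ∃ a < d, ∃ m < d ^ (N - 1), n = a * t + m := by
  constructor
  · rintro ⟨i, hi, rfl⟩
    have htail := (Nat.exists_sum_Icc_two_digit_mul_pow_eq_iff (N := N)).mp
      ⟨i, fun k hk => hi k (by simp only [mem_Icc] at hk ⊢; omega), rfl⟩
    exact ⟨i 1, hi 1 (by simp only [mem_Icc]; omega), _, htail, rfl⟩
  · rintro ⟨a, ha, m, hm, rfl⟩
    obtain ⟨i, hi, rfl⟩ := Nat.exists_sum_Icc_two_digit_mul_pow_eq_iff.mpr hm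
    refine ⟨Function.update i 1 a, fun k hk => ?_, ?_⟩
    · rcases eq_or_ne k 1 with rfl | hk1
      · simpa using ha
      · rw [Function.update_of_ne hk1]
        exact hi k (by simp only [mem_Icc] at hk ⊢; omega)
    · rw [Function.update_self]
      congr 1
      refine sum_congr rfl fun k hk => ?_
      rw [Function.update_of_ne (by simp only [mem_Icc] at hk; omega)]

theorem Nat.exists_lt_mul_add_lt_iff {c t D n : ℕ} (hc : 0 < c) (htD : t ≤ D) :
    (∃ a < c, ∃ m < D, n = a * t + m) ↔ n < (c - 1) * t + D := by
  constructor
  · rintro ⟨a, ha, m, hm, rfl⟩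
    have : a * t ≤ (c - 1) * t := Nat.mul_le_mul_right t (by omega)
    omega
  · intro hn
    rcases le_or_gt (c - 1) (n / t) with hcn | hnc
    · have : (c - 1) * t ≤ n := (Nat.mul_le_mul_right t hcn).trans (Nat.div_mul_le_self n t)
      exact ⟨c - 1, by omega, n - (c - 1) * t, by omega, by omega⟩
    · refine ⟨n / t, by omega, n % t, ?_, (Nat.div_add_mod' n t).symm⟩
      rcases Nat.eq_zero_or_pos t with rfl | ht
      · simpa using hn
      · exact (Nat.mod_lt n ht).trans_le htD

theorem stmt12 (d N : ℕ) (hd : 2 ≤ d) (hN : 2 ≤ N) :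
    {n : ℕ | ∃ i : ℕ → ℕ, (∀ k ∈ Finset.Icc 1 N, i k < d) ∧
        n = i 1 * (d ^ (N - 1) - d + 1) + ∑ k ∈ Finset.Icc 2 N, i k * d ^ (N - k)}
      = Set.Iio (d ^ N - (d - 1) ^ 2) ∧
    Set.ncard {n : ℕ | ∃ i : ℕ → ℕ, (∀ k ∈ Finset.Icc 1 N, i k < d) ∧
        n = i 1 * (d ^ (N - 1) - d + 1) + ∑ k ∈ Finset.Icc 2 N, i k * d ^ (N - k)}
      = d ^ N - (d - 1) ^ 2 := by
  have hdD : d ≤ d ^ (N - 1) := Nat.le_self_pow (by omega) d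
  have hpow : d ^ N = d * d ^ (N - 1) := by rw [← pow_succ']; congr 1; omega
  have hend : (d - 1) * (d ^ (N - 1) - d + 1) + d ^ (N - 1) = d ^ N - (d - 1) ^ 2 := by
    have : (d - 1) ^ 2 ≤ d * d ^ (N - 1) :=
      (Nat.pow_le_pow_left (Nat.sub_le d 1) 2).trans (by rw [sq]; exact Nat.mul_le_mul_left d hdD)
    rw [hpow]
    zify [hdD, this, show 1 ≤ d by omega]
    ring
  refine (fun hset : _ = _ => ⟨hset, by rw [hset, Set.ncard_Iio_nat]⟩) (Set.ext fun n => ?_)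
  rw [Set.mem_ofPred_eq, Nat.exists_leading_digit_mul_add_tail_eq_iff (by omega),
    Nat.exists_lt_mul_add_lt_iff (by omega) (by omega), hend, Set.mem_Iio]
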